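/- Let G be an ℓ-partite graph on parts V₁,...,V_ℓ of size m with each vertex having exactly n neighbors in every other part, and let λ₂ be the second largest adjacency eigenvalue of G. Let C be an [(ℓ−1)n, k, d] linear code over 𝔽_q, and let 𝒞 be the generalized graph code on G with base code C at every vertex. Then the minimum distance D of 𝒞 satisfies D ≥ dm(d − λ₂)/((ℓ−1)n − λ₂). -/

import Mathlib

/-!
Let `H ≤ G` consist of the edges carrying a nonzero symbol and let `S` be the set of vertices that
meet `H`. The local word at `v` has weight `deg_H v`, so every vertex of `S` has at least `d`
neighbours in `H`, all of them in `S`; for the indicator `x` of `S` this gives both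
`d|S| ≤ xᵀAx` and `d|S| ≤ 2|E(H)|`. As `G` is `K`-regular with `K = (ℓ-1)n > λ₂`, the constant
vector spans the top eigenspace, and expanding `x` in an eigenbasis gives
`xᵀAx ≤ λ₂|S| + (K-λ₂)|S|²/|V|`. Hence `(d-λ₂)|V| ≤ (K-λ₂)|S|`, so
`|E(H)| ≥ dℓm(d-λ₂)/(2(K-λ₂)) ≥ dm(d-λ₂)/(K-λ₂)` since `ℓ ≥ 2` (for `d ≤ λ₂` the bound is
nonpositive).
-/

open Finset Matrix SimpleGraph

namespace Matrix.IsHermitian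

variable {V : Type*} [Fintype V] [DecidableEq V] {A : Matrix V V ℝ} (hA : A.IsHermitian)

lemma dotProduct_eq_sum_eigenvectorBasis (x y : V → ℝ) :
    x ⬝ᵥ y = ∑ j, (⇑(hA.eigenvectorBasis j) ⬝ᵥ x) * (⇑(hA.eigenvectorBasis j) ⬝ᵥ y) := by
  have := (hA.eigenvectorBasis).sum_inner_mul_inner (WithLp.toLp 2 x) (WithLp.toLp 2 y)
  simp only [EuclideanSpace.inner_eq_star_dotProduct, star_trivial] at this
  rw [dotProduct_comm, ← this]
  simp only [dotProduct_comm y]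

lemma eigenvectorBasis_dotProduct_mulVec (j : V) (x : V → ℝ) :
    ⇑(hA.eigenvectorBasis j) ⬝ᵥ (A *ᵥ x) =
      hA.eigenvalues j * (⇑(hA.eigenvectorBasis j) ⬝ᵥ x) := by
  rw [dotProduct_mulVec, ← mulVec_transpose,
    (isHermitian_iff_isSymm.mp hA).eq, mulVec_eigenvectorBasis, smul_dotProduct, smul_eq_mul]

lemma dotProduct_mulVec_self_eq_sum (x : V → ℝ) :
    x ⬝ᵥ (A *ᵥ x) = ∑ j, hA.eigenvalues j * (⇑(hA.eigenvectorBasis j) ⬝ᵥ x) ^ 2 := by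
  rw [hA.dotProduct_eq_sum_eigenvectorBasis]
  exact sum_congr rfl fun j _ => by rw [eigenvectorBasis_dotProduct_mulVec]; ring

lemma eigenvectorBasis_dotProduct_eq_zero_of_mulVec_eq_smul {K : ℝ} {w : V → ℝ}
    (hw : A *ᵥ w = K • w) {j : V} (hj : hA.eigenvalues j ≠ K) :
    ⇑(hA.eigenvectorBasis j) ⬝ᵥ w = 0 := by
  have h := hA.eigenvectorBasis_dotProduct_mulVec j w
  rw [hw, dotProduct_smul, smul_eq_mul] at h
  exact (mul_eq_mul_right_iff.mp h.symm).resolve_left hj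

lemma dotProduct_mulVec_self_le_of_mulVec_one {K lam : ℝ} {j₀ : V}
    (hones : A *ᵥ 1 = K • 1) (hlam : ∀ j ≠ j₀, hA.eigenvalues j ≤ lam) (hK : lam < K)
    (x : V → ℝ) :
    x ⬝ᵥ (A *ᵥ x) ≤ lam * (x ⬝ᵥ x) + (K - lam) * (1 ⬝ᵥ x) ^ 2 / Fintype.card V := by
  set a : V → ℝ := fun j => ⇑(hA.eigenvectorBasis j) ⬝ᵥ x
  set u : V → ℝ := fun j => ⇑(hA.eigenvectorBasis j) ⬝ᵥ 1
  have hu : ∀ j ≠ j₀, u j = 0 := fun j hj =>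
    hA.eigenvectorBasis_dotProduct_eq_zero_of_mulVec_eq_smul hones ((hlam j hj).trans_lt hK).ne
  have hcard : (Fintype.card V : ℝ) = u j₀ ^ 2 := by
    have h := hA.dotProduct_eq_sum_eigenvectorBasis 1 1
    rw [Fintype.sum_eq_single j₀ fun j hj => by simp [u, hu j hj]] at h
    simpa [sq] using h
  have hsum : 1 ⬝ᵥ x = u j₀ * a j₀ := by
    rw [hA.dotProduct_eq_sum_eigenvectorBasis,
      Fintype.sum_eq_single j₀ fun j hj => by simp [u, hu j hj]]
  have hu₀ : u j₀ ≠ 0 := by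
    have : Nonempty V := ⟨j₀⟩
    rintro h
    simp [h] at hcard
  have heig₀ : hA.eigenvalues j₀ = K := by
    by_contra h
    exact hu₀ (hA.eigenvectorBasis_dotProduct_eq_zero_of_mulVec_eq_smul hones h)
  have hrest : ∑ j ∈ univ.erase j₀, hA.eigenvalues j * a j ^ 2 ≤
      lam * ∑ j ∈ univ.erase j₀, a j ^ 2 := by
    rw [mul_sum]
    exact sum_le_sum fun j hj =>
      mul_le_mul_of_nonneg_right (hlam j (ne_of_mem_erase hj)) (sq_nonneg _)
  have hxx : x ⬝ᵥ x = a j₀ ^ 2 + ∑ j ∈ univ.erase j₀, a j ^ 2 := by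
    rw [hA.dotProduct_eq_sum_eigenvectorBasis, ← add_sum_erase _ _ (mem_univ j₀)]
    simp only [a, sq]
  have hsq : (1 ⬝ᵥ x) ^ 2 / Fintype.card V = a j₀ ^ 2 := by
    rw [hsum, hcard]
    field_simp
  rw [mul_div_assoc, hsq, hxx, hA.dotProduct_mulVec_self_eq_sum,
    ← add_sum_erase _ _ (mem_univ j₀), heig₀]
  linarith

end Matrix.IsHermitian

namespace SimpleGraph

variable {V : Type*} [Fintype V] {G : SimpleGraph V} [DecidableRel G.Adj]

section

variable {H : SimpleGraph V} [DecidableRel H.Adj]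

lemma mul_card_le_two_mul_card_edgeFinset {d : ℕ} (hd : ∀ v, H.degree v ≠ 0 → d ≤ H.degree v) :
    d * #{v | H.degree v ≠ 0} ≤ 2 * #H.edgeFinset := by
  rw [← sum_degrees_eq_twice_card_edges, mul_comm, ← smul_eq_mul, ← sum_const]
  calc ∑ _v ∈ {v | H.degree v ≠ 0}, d ≤ ∑ v ∈ {v | H.degree v ≠ 0}, H.degree v :=
        sum_le_sum fun v hv => hd v (mem_filter.mp hv).2
    _ ≤ ∑ v, H.degree v := sum_le_sum_of_subset (subset_univ _)

lemma indicator_dotProduct_adjMatrix_mulVec_indicator (S : Finset V) :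
    Set.indicator (S : Set V) 1 ⬝ᵥ (G.adjMatrix ℝ *ᵥ Set.indicator (S : Set V) 1) =
      ∑ v ∈ S, (#{u ∈ S | G.Adj v u} : ℝ) := by
  classical
  simp only [dotProduct, adjMatrix_mulVec_apply, Set.indicator_apply, mem_coe, Pi.one_apply,
    ite_mul, one_mul, zero_mul, sum_ite_mem, univ_inter, sum_const, nsmul_one]
  refine sum_congr rfl fun v _ => ?_
  rw [inter_comm, ← filter_mem_eq_inter]
  simp

lemma le_two_mul_card_edgeFinset_mul_of_eigenvalues_le [DecidableEq V]
    (hA : (G.adjMatrix ℝ).IsHermitian) {K lam : ℝ} {j₀ : V}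
    (hones : G.adjMatrix ℝ *ᵥ 1 = K • 1) (hlam : ∀ j ≠ j₀, hA.eigenvalues j ≤ lam) (hK : lam < K)
    (hHG : H ≤ G) (hH : H.edgeFinset.Nonempty) {d : ℕ}
    (hd : ∀ v, H.degree v ≠ 0 → d ≤ H.degree v) :
    d * Fintype.card V * (d - lam) ≤ 2 * #H.edgeFinset * (K - lam) := by
  set S : Finset V := {v | H.degree v ≠ 0}
  set x : V → ℝ := Set.indicator (S : Set V) 1
  have hS : 0 < (#S : ℝ) := by
    obtain ⟨e, he⟩ := hH
    induction e using Sym2.ind with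
    | _ u w =>
      have hu : u ∈ S := by
        simpa [S] using ((H.degree_pos_iff_exists_adj u).mpr ⟨w, mem_edgeFinset.mp he⟩).ne'
      exact_mod_cast card_pos.mpr ⟨u, hu⟩
  have hN : (0 : ℝ) < Fintype.card V := hS.trans_le (mod_cast card_le_univ S)
  have hxx : x ⬝ᵥ x = #S := by
    classical
    simp [x, dotProduct, Set.indicator_apply]
  have hsum : 1 ⬝ᵥ x = #S := by
    classical
    simp [x, one_dotProduct, Set.indicator_apply]
  have hlower : (d * #S : ℝ) ≤ x ⬝ᵥ (G.adjMatrix ℝ *ᵥ x) := by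
    rw [indicator_dotProduct_adjMatrix_mulVec_indicator, mul_comm, ← nsmul_eq_mul, ← sum_const]
    refine sum_le_sum fun v hv => ?_
    have hsub : H.neighborFinset v ⊆ {u ∈ S | G.Adj v u} := fun u hu => by
      have hadj := (mem_neighborFinset _ _ _).mp hu
      simpa [S, hHG hadj] using ((H.degree_pos_iff_exists_adj u).mpr ⟨v, hadj.symm⟩).ne'
    exact_mod_cast (hd v (mem_filter.mp hv).2).trans (card_le_card hsub)
  have hupper := hA.dotProduct_mulVec_self_le_of_mulVec_one hones hlam hK x
  rw [hxx, hsum] at hupper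
  have hsupport : (d - lam) * Fintype.card V ≤ (K - lam) * #S := by
    have h : (d - lam) * #S ≤ (K - lam) * #S ^ 2 / Fintype.card V := by
      linarith [hlower.trans hupper]
    rw [le_div_iff₀ hN] at h
    exact le_of_mul_le_mul_right (by linarith) hS
  have hedges : (d * #S : ℝ) ≤ 2 * #H.edgeFinset := mod_cast mul_card_le_two_mul_card_edgeFinset hd
  calc d * Fintype.card V * (d - lam) = d * ((d - lam) * Fintype.card V) := by ring
    _ ≤ d * ((K - lam) * #S) := mul_le_mul_of_nonneg_left hsupport d.cast_nonneg
    _ = d * #S * (K - lam) := by ring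
    _ ≤ 2 * #H.edgeFinset * (K - lam) := mul_le_mul_of_nonneg_right hedges (sub_nonneg.mpr hK.le)

end

section DeleteEdges

variable [DecidableEq V]

instance decidableRelDeleteEdges (s : Set (Sym2 V)) [DecidablePred (· ∈ s)] :
    DecidableRel (G.deleteEdges s).Adj :=
  fun _ _ => decidable_of_iff' _ deleteEdges_adj

lemma hammingNorm_eq_degree_deleteEdges {F : Type*} [Zero F] [DecidableEq F] {N : ℕ} {v : V}
    (β : Fin N ≃ {e : Sym2 V // e ∈ G.edgeFinset ∧ v ∈ e}) (c : Sym2 V → F) :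
    hammingNorm (fun i => c (β i).val) = (G.deleteEdges {e | c e = 0}).degree v := by
  rw [hammingNorm, ← card_incidenceFinset_eq_degree, incidenceFinset_eq_filter]
  refine card_nbij (fun i => (β i).val) ?_ ?_ ?_
  · intro i hi
    have := (β i).2
    simp_all [edgeSet_deleteEdges]
  · intro i _ j _ h
    exact β.injective (Subtype.ext h)
  · intro e he
    simp only [coe_filter, mem_edgeFinset, edgeSet_deleteEdges] at he
    refine ⟨β.symm ⟨e, mem_edgeFinset.mpr he.1.1, he.2⟩, by simpa using he.1.2, by simp⟩

end DeleteEdges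

end SimpleGraph

section Partition

variable {V : Type*} {ℓ : ℕ} {P : Fin ℓ → Finset V}

lemma card_eq_sum_card_filter_mem_parts [DecidableEq V] (hpart : ∀ v, ∃! i, v ∈ P i)
    (s : Finset V) : #s = ∑ i, #{v ∈ s | v ∈ P i} := by
  rw [← card_biUnion fun i _ j _ hij => disjoint_filter.mpr fun v _ hi hj =>
    hij ((hpart v).unique hi hj)]
  congr 1
  ext v
  simpa using fun _ => (hpart v).exists

lemma card_eq_mul_of_card_parts [Fintype V] [DecidableEq V] (hpart : ∀ v, ∃! i, v ∈ P i)
    {m : ℕ} (hm : ∀ i, #(P i) = m) : Fintype.card V = ℓ * m := by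
  rw [← card_univ, card_eq_sum_card_filter_mem_parts hpart]
  simp [hm]

variable {G : SimpleGraph V}

lemma two_le_of_adj (hpart : ∀ v, ∃! i, v ∈ P i) (hnoedge : ∀ i, ∀ u ∈ P i, ∀ v ∈ P i, ¬ G.Adj u v)
    {u w : V} (huw : G.Adj u w) : 2 ≤ ℓ := by
  obtain ⟨i, hi, -⟩ := hpart u
  obtain ⟨j, hj, -⟩ := hpart w
  have hij : i ≠ j := by
    rintro rfl
    exact hnoedge i u hi w hj huw
  exact Fin.nontrivial_iff_two_le.mp (nontrivial_of_ne i j hij)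

lemma degree_eq_of_partite [Fintype V] [DecidableEq V] [DecidableRel G.Adj]
    (hpart : ∀ v, ∃! i, v ∈ P i) (hnoedge : ∀ i, ∀ u ∈ P i, ∀ v ∈ P i, ¬ G.Adj u v) {n : ℕ}
    (hdeg : ∀ i j, i ≠ j → ∀ v ∈ P i, ((P j).filter (G.Adj v)).card = n) (v : V) :
    G.degree v = (ℓ - 1) * n := by
  obtain ⟨i, hi, -⟩ := hpart v
  rw [← G.card_neighborFinset_eq_degree v, card_eq_sum_card_filter_mem_parts hpart,
    ← add_sum_erase _ _ (mem_univ i)]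
  have hown : {u ∈ G.neighborFinset v | u ∈ P i} = ∅ :=
    filter_eq_empty_iff.mpr fun u hu hui => hnoedge i v hi u hui ((G.mem_neighborFinset v u).mp hu)
  have hother : ∀ j ∈ univ.erase i, #{u ∈ G.neighborFinset v | u ∈ P j} = n := fun j hj => by
    rw [← hdeg i j (ne_of_mem_erase hj).symm v hi]
    congr 1
    ext u
    simp [and_comm]
  rw [hown, card_empty, zero_add, sum_congr rfl hother, sum_const, card_erase_of_mem (mem_univ i),
    card_univ, Fintype.card_fin, smul_eq_mul]

end Partition

lemma le_apply_one_of_antitone_comp {V : Type*} {N : ℕ} {f : V → ℝ} (e : Fin N ≃ V)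
    (hf : Antitone (f ∘ e)) (hN : 1 < N) {j : V} (hj : j ≠ e ⟨0, by omega⟩) :
    f j ≤ f (e ⟨1, hN⟩) := by
  have h : (⟨1, hN⟩ : Fin N) ≤ e.symm j := by
    rw [Fin.le_def]
    have : e.symm j ≠ ⟨0, by omega⟩ := by
      rintro h
      exact hj (by rw [← h, Equiv.apply_symm_apply])
    exact Nat.one_le_iff_ne_zero.mpr (Fin.val_ne_of_ne this)
  simpa using hf h

theorem stmt9 {V : Type} [Fintype V] [DecidableEq V]
    (G : SimpleGraph V) [DecidableRel G.Adj] (ℓ m n : ℕ)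
    (P : Fin ℓ → Finset V)
    (hpart : ∀ v : V, ∃! i, v ∈ P i)
    (hm : ∀ i, (P i).card = m)
    (hnoedge : ∀ i, ∀ u ∈ P i, ∀ v ∈ P i, ¬ G.Adj u v)
    (hdeg : ∀ i j, i ≠ j → ∀ v ∈ P i, ((P j).filter (G.Adj v)).card = n)
    (hA : (G.adjMatrix ℝ).IsHermitian)
    (hcard : 2 ≤ Fintype.card V)
    (e : Fin (Fintype.card V) ≃ V) (hmono : Antitone (hA.eigenvalues ∘ e))
    (hgap : hA.eigenvalues (e ⟨1, by omega⟩) < ((ℓ : ℝ) - 1) * n)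
    (F : Type) [Field F] [DecidableEq F]
    (C : Submodule F (Fin ((ℓ - 1) * n) → F)) (d : ℕ)
    (hdC : ∀ w ∈ C, w ≠ 0 → d ≤ hammingNorm w)
    (β : ∀ v : V, Fin ((ℓ - 1) * n) ≃ {e : Sym2 V // e ∈ G.edgeFinset ∧ v ∈ e})
    (c : Sym2 V → F)
    (hcC : ∀ v : V, (fun i => c (β v i).val) ∈ C)
    (hcne : ∃ e' ∈ G.edgeFinset, c e' ≠ 0) :
    (d : ℝ) * m * ((d : ℝ) - hA.eigenvalues (e ⟨1, by omega⟩)) /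
        (((ℓ : ℝ) - 1) * n - hA.eigenvalues (e ⟨1, by omega⟩)) ≤
      (G.edgeFinset.filter (fun e' => c e' ≠ 0)).card := by
  set H := G.deleteEdges {e' | c e' = 0}
  have hH : H.edgeFinset = G.edgeFinset.filter (fun e' => c e' ≠ 0) := by
    ext e'
    simp [H, edgeSet_deleteEdges]
  obtain ⟨e₀, he₀, hce₀⟩ := hcne
  have hℓ : 2 ≤ ℓ := by
    induction e₀ using Sym2.ind with
    | _ u w => exact two_le_of_adj hpart hnoedge (mem_edgeFinset.mp he₀)
  have hones : G.adjMatrix ℝ *ᵥ 1 = (((ℓ : ℝ) - 1) * n) • 1 := by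
    ext v
    have hreg : G.IsRegularOfDegree ((ℓ - 1) * n) := degree_eq_of_partite hpart hnoedge hdeg
    simp [← Function.const_one, adjMatrix_mulVec_const_apply_of_regular hreg,
      Nat.cast_sub (by omega : 1 ≤ ℓ)]
  have hsupport : ∀ v, H.degree v ≠ 0 → d ≤ H.degree v := fun v hv => by
    rw [← hammingNorm_eq_degree_deleteEdges (β v)] at hv ⊢
    exact hdC _ (hcC v) (hammingNorm_ne_zero_iff.mp hv)
  have key := le_two_mul_card_edgeFinset_mul_of_eigenvalues_le hA hones
    (fun j hj => le_apply_one_of_antitone_comp e hmono (by omega) hj) hgap (deleteEdges_le _)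
    (hH ▸ ⟨e₀, mem_filter.mpr ⟨he₀, hce₀⟩⟩) hsupport
  have hV : (Fintype.card V : ℝ) = ℓ * m := mod_cast card_eq_mul_of_card_parts hpart hm
  rw [hV, hH] at key
  rw [div_le_iff₀ (sub_pos.mpr hgap)]
  set lam := hA.eigenvalues (e ⟨1, by omega⟩)
  rcases le_or_gt (d : ℝ) lam with hd | hd
  · exact (mul_nonpos_of_nonneg_of_nonpos (by positivity) (sub_nonpos.mpr hd)).trans
      (mul_nonneg (Nat.cast_nonneg _) (sub_pos.mpr hgap).le)
  · have hℓ' : (2 : ℝ) ≤ ℓ := mod_cast hℓ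
    nlinarith [mul_le_mul_of_nonneg_right hℓ' (by positivity : (0 : ℝ) ≤ d * m * (d - lam))]
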